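/- With notation as in the 4-subset construction, |S_0| = 2^{2ν−3} − 1, |S_2| = 3·2^{2ν−2}, and |S_4| = 2^{2ν−3}. -/

import Mathlib

open Finset

abbrev F2 := ZMod 2

/-- Vectors in `F_2^{2ν}`, divided into `ν` blocks of length 2. -/
abbrev Vec (ν : ℕ) := Fin ν → Fin 2 → F2

/-- The symplectic form `x^T K y` with `K = I_ν ⊗ R`, `R = [[0,1],[1,0]]`. -/
def sform {ν : ℕ} (x y : Vec ν) : F2 := ∑ l, (x l 0 * y l 1 + x l 1 * y l 0)

/-- The vertex set of the symplectic graph `Sp(2ν,2)`: nonzero vectors.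
Vertices `x, y` are adjacent iff `sform x y = 1`. -/
abbrev Vtx (ν : ℕ) := {x : Vec ν // x ≠ 0}

/-- The weight of a length-2 block. -/
def wt (b : Fin 2 → F2) : ℕ := (univ.filter (fun c => b c ≠ 0)).card

/-- The number of blocks of `x` having weight `w`. -/
def nblk {ν : ℕ} (x : Vec ν) (w : ℕ) : ℕ := (univ.filter (fun l => wt (x l) = w)).card

/-- `x` belongs to the 4-subset `S = {v_1,v_2,v_3,v_4}`. -/
def inS {ν : ℕ} (v : Fin 4 → Vec ν) (x : Vec ν) : Prop := ∃ i, x = v i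

/-- `x` belongs to `T = {v_1+v_2, v_2+v_3, v_3+v_1}`. -/
def inT {ν : ℕ} (v : Fin 4 → Vec ν) (x : Vec ν) : Prop :=
  ∃ i j : Fin 4, i ≠ 3 ∧ j ≠ 3 ∧ i ≠ j ∧ x = v i + v j

/-- The number of indices `j ∈ [4]` with `x^T K v_j = 1`. -/
def cnt {ν : ℕ} (v : Fin 4 → Vec ν) (x : Vec ν) : ℕ :=
  (univ.filter (fun j : Fin 4 => sform x (v j) = 1)).card

instance {ν : ℕ} (v : Fin 4 → Vec ν) : DecidablePred (inS v) := fun _ =>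
  inferInstanceAs (Decidable (∃ _, _))

instance {ν : ℕ} (v : Fin 4 → Vec ν) : DecidablePred (inT v) := fun _ =>
  inferInstanceAs (Decidable (∃ _, _))

/-- The set `S` as a finset of vertices. -/
def Sfin {ν : ℕ} (v : Fin 4 → Vec ν) : Finset (Vtx ν) := univ.filter (fun x => inS v x.1)

/-- The set `T` as a finset of vertices. -/
def Tfin {ν : ℕ} (v : Fin 4 → Vec ν) : Finset (Vtx ν) := univ.filter (fun x => inT v x.1)

/-- The set `S_i` of vertices `x` with `#{j : x^T K v_j = 1} = i`, as a finset. -/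
def Sifin {ν : ℕ} (v : Fin 4 → Vec ν) (i : ℕ) : Finset (Vtx ν) :=
  univ.filter (fun x => cnt v x.1 = i)

/-- The set `S_0 \ (S ∪ T)` as a finset of vertices. -/
def S0'fin {ν : ℕ} (v : Fin 4 → Vec ν) : Finset (Vtx ν) :=
  univ.filter (fun x => cnt v x.1 = 0 ∧ ¬ inS v x.1 ∧ ¬ inT v x.1)

/-- The number of neighbors of the vertex `x` inside the finset `C`. -/
def nbc {ν : ℕ} (x : Vtx ν) (C : Finset (Vtx ν)) : ℕ :=
  (C.filter (fun y => sform x.1 y.1 = 1)).card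

/-- The standing hypotheses on the special 4-subset `S = {v_1,v_2,v_3,v_4}`:
all `v_i` are vertices, `v_1,v_2,v_3` are linearly independent and pairwise
(and self) `K`-orthogonal, and `v_4 = v_1 + v_2 + v_3`. -/
structure SConfig (ν : ℕ) (v : Fin 4 → Vec ν) : Prop where
  hne : ∀ i, v i ≠ 0
  hind : LinearIndependent F2 ![v 0, v 1, v 2]
  horth : ∀ i j : Fin 4, i ≠ 3 → j ≠ 3 → sform (v i) (v j) = 0
  hsum : v 3 = v 0 + v 1 + v 2

/-! The map `x ↦ (B(x,v₁), B(x,v₂), B(x,v₃))` is linear, and it is onto `F₂³` because `B` is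
nondegenerate and `v₁, v₂, v₃` are independent; hence each of its eight fibres has `2^{2ν-3}`
elements. As `v₄ = v₁ + v₂ + v₃`, the number of `j` with `B(x,v_j) = 1` depends only on the image
of `x`: it is `0` for `(0,0,0)`, `4` for `(1,1,1)` and `2` for the six other patterns. The vertex
set omits `x = 0`, which lies in the fibre over `(0,0,0)`. -/

theorem card_fiber_mul_card_of_surjective {G H F : Type*} [AddGroup G] [Fintype G] [AddMonoid H]
    [Fintype H] [DecidableEq H] [FunLike F G H] [AddMonoidHomClass F G H] {f : F}
    (hf : Function.Surjective f) (a : H) :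
    #{x | f x = a} * Fintype.card H = Fintype.card G := by
  calc #{x | f x = a} * Fintype.card H = ∑ b, #{x | f x = b} := by
        rw [sum_congr rfl fun b _ => AddMonoidHom.card_fiber_eq_of_mem_range f (hf b) (hf a),
          sum_const, smul_eq_mul, mul_comm, card_univ]
    _ = Fintype.card G := (card_eq_sum_card_fiberwise fun _ _ => mem_univ _).symm

theorem card_filter_mem_mul_card_of_surjective {G H F : Type*} [AddGroup G] [Fintype G]
    [AddMonoid H] [Fintype H] [DecidableEq H] [FunLike F G H] [AddMonoidHomClass F G H] {f : F}
    (hf : Function.Surjective f) (t : Finset H) :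
    #{x | f x ∈ t} * Fintype.card H = #t * Fintype.card G := by
  rw [← sum_card_fiberwise_eq_card_filter, sum_mul,
    sum_congr rfl fun b _ => card_fiber_mul_card_of_surjective hf b, sum_const, smul_eq_mul]

theorem LinearMap.BilinForm.surjective_pi_flip_of_linearIndependent {K V ι : Type*} [Field K]
    [AddCommGroup V] [Module K V] [FiniteDimensional K V] [Fintype ι]
    {B : LinearMap.BilinForm K V} (hB : B.Nondegenerate) {v : ι → V}
    (hv : LinearIndependent K v) :
    Function.Surjective (LinearMap.pi fun i => B.flip (v i)) := by
  classical
  intro a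
  obtain ⟨g, hg⟩ := LinearMap.dualMap_surjective_of_injective
    hv.fintypeLinearCombination_injective (Fintype.linearCombination K a)
  refine ⟨(B.toDual hB).symm g, funext fun i => ?_⟩
  simpa using LinearMap.congr_fun hg (Pi.single i 1)

section

variable {ν : ℕ}

theorem sform_add_left (x y z : Vec ν) : sform (x + y) z = sform x z + sform y z := by
  simp only [sform, Pi.add_apply, ← sum_add_distrib]
  exact sum_congr rfl fun _ _ => by ring

theorem sform_smul_left (c : F2) (x y : Vec ν) : sform (c • x) y = c * sform x y := by
  simp only [sform, Pi.smul_apply, smul_eq_mul, mul_sum]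
  exact sum_congr rfl fun _ _ => by ring

theorem sform_comm (x y : Vec ν) : sform x y = sform y x :=
  sum_congr rfl fun _ _ => by ring

variable (ν) in
def sformBilin : LinearMap.BilinForm F2 (Vec ν) :=
  LinearMap.mk₂ F2 sform sform_add_left sform_smul_left
    (fun x y z => by simp only [sform_comm x, sform_add_left])
    (fun c x y => by simp only [sform_comm x, sform_smul_left, smul_eq_mul])

@[simp] theorem sformBilin_apply (x y : Vec ν) : sformBilin ν x y = sform x y := rfl

theorem sform_pi_single_right (x : Vec ν) (l : Fin ν) (b : Fin 2 → F2) :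
    sform x (Pi.single l b) = x l 0 * b 1 + x l 1 * b 0 := by
  rw [sform, sum_eq_single l (fun m _ hm => by simp [Pi.single_eq_of_ne hm]) (by simp)]
  simp

theorem sformBilin_nondegenerate : (sformBilin ν).Nondegenerate := by
  have hleft : (sformBilin ν).SeparatingLeft := fun x hx => by
    funext l c
    fin_cases c
    · simpa [sform_pi_single_right] using hx (Pi.single l ![0, 1])
    · simpa [sform_pi_single_right] using hx (Pi.single l ![1, 0])
  exact ⟨hleft, fun y hy => hleft y fun x => by simpa [sform_comm] using hy x⟩

def formValues (v : Fin 4 → Vec ν) : Vec ν →ₗ[F2] Fin 3 → F2 :=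
  LinearMap.pi fun i => (sformBilin ν).flip (![v 0, v 1, v 2] i)

theorem SConfig.formValues_surjective {v : Fin 4 → Vec ν} (hv : SConfig ν v) :
    Function.Surjective (formValues v) :=
  LinearMap.BilinForm.surjective_pi_flip_of_linearIndependent sformBilin_nondegenerate hv.hind

def cntOfValues (a : Fin 3 → F2) : ℕ := #{j : Fin 4 | ![a 0, a 1, a 2, a 0 + a 1 + a 2] j = 1}

theorem SConfig.cnt_eq_cntOfValues {v : Fin 4 → Vec ν} (hv : SConfig ν v) (x : Vec ν) :
    cnt v x = cntOfValues (formValues v x) := by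
  have hv3 : sform x (v 3) = sform x (v 0) + sform x (v 1) + sform x (v 2) := by
    simp only [hv.hsum, ← sformBilin_apply, map_add]
  refine congrArg card (filter_congr fun j _ => ?_)
  fin_cases j <;> simp [formValues, hv3]

theorem cnt_zero (v : Fin 4 → Vec ν) : cnt v 0 = 0 := by
  simp [cnt, sform]

theorem card_Sifin_eq_card_erase_zero (v : Fin 4 → Vec ν) (i : ℕ) :
    #(Sifin v i) = #(({x : Vec ν | cnt v x = i} : Finset (Vec ν)).erase 0) := by
  rw [← card_map (Function.Embedding.subtype _)]
  congr 1
  ext x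
  simp [Sifin, and_comm]

theorem SConfig.three_le_two_mul {v : Fin 4 → Vec ν} (hv : SConfig ν v) : 3 ≤ 2 * ν := by
  simpa [Module.finrank_pi_fintype, mul_comm] using hv.hind.fintype_card_le_finrank

theorem SConfig.card_filter_cnt_eq {v : Fin 4 → Vec ν} (hv : SConfig ν v) (i : ℕ) :
    #{x : Vec ν | cnt v x = i} = #{a : Fin 3 → F2 | cntOfValues a = i} * 2 ^ (2 * ν - 3) := by
  have hcount := card_filter_mem_mul_card_of_surjective hv.formValues_surjective
    {a | cntOfValues a = i}
  have hcardV : Fintype.card (Vec ν) = 2 ^ (2 * ν - 3) * 2 ^ 3 := by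
    rw [← pow_add, Nat.sub_add_cancel hv.three_le_two_mul]
    simp [pow_mul]
  have hcardW : Fintype.card (Fin 3 → F2) = 2 ^ 3 := by simp
  simp only [mem_filter, mem_univ, true_and, ← hv.cnt_eq_cntOfValues] at hcount
  rw [hcardV, hcardW, ← mul_assoc] at hcount
  exact Nat.eq_of_mul_eq_mul_right (by norm_num) hcount

end

theorem card_Si_general (ν : ℕ) (v : Fin 4 → Vec ν) (hv : SConfig ν v) :
    (Sifin v 0).card = 2 ^ (2 * ν - 3) - 1 ∧
    (Sifin v 2).card = 3 * 2 ^ (2 * ν - 2) ∧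
    (Sifin v 4).card = 2 ^ (2 * ν - 3) := by
  have h0 : #{a : Fin 3 → F2 | cntOfValues a = 0} = 1 := by decide
  have h2 : #{a : Fin 3 → F2 | cntOfValues a = 2} = 6 := by decide
  have h4 : #{a : Fin 3 → F2 | cntOfValues a = 4} = 1 := by decide
  simp only [card_Sifin_eq_card_erase_zero, card_erase_eq_ite, mem_filter, mem_univ, true_and,
    cnt_zero, hv.card_filter_cnt_eq, h0, h2, h4]
  refine ⟨by simp, ?_, by simp⟩
  rw [if_neg (by norm_num), show 2 * ν - 2 = 2 * ν - 3 + 1 by have := hv.three_le_two_mul; omega,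
    pow_succ]
  ring

/-- `|S_0| = 2^{2ν-3} - 1`, `|S_2| = 3·2^{2ν-2}` and `|S_4| = 2^{2ν-3}`. -/
theorem card_Si (ν : ℕ) (hν : 3 ≤ ν) (v : Fin 4 → Vec ν) (hv : SConfig ν v) :
    (Sifin v 0).card = 2 ^ (2 * ν - 3) - 1 ∧
    (Sifin v 2).card = 3 * 2 ^ (2 * ν - 2) ∧
    (Sifin v 4).card = 2 ^ (2 * ν - 3) :=
  card_Si_general ν v hv
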